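/- Let R > 0, let J ⊆ ℝ be an interval, and let h̃₀ : J → ℝ be C¹. Define F̃(s,r) = (x(s,r), y(s,r), t(s,r)) = ((R+r)cos(s/R), (R+r)sin(s/R), h̃₀(s)) for s ∈ J and r ∈ ℝ, and set p̃ = y_s t_r − y_r t_s − (y/2)(x_s y_r − x_r y_s), q̃ = x_r t_s − x_s t_r + (x/2)(x_s y_r − x_r y_s), ω̃ = x_s y_r − x_r y_s (subscripts denoting partial derivatives). Then ω̃ = −(R+r)/R, p̃² + q̃² = (h̃₀'(s) − (R+r)²/(2R))², and hence the angle function satisfies √(p̃² + q̃²) = |h̃₀'(s) − (R+r)²/(2R)|. In particular, if the surface parameterized by F̃ on J×ℝ has no characteristic points (i.e. p̃²+q̃² never vanishes), then h̃₀'(s) < 0 for every s ∈ J. -/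

import Mathlib

/-- `x(s,r) = (R+r)cos(s/R)`. -/
noncomputable def xC (R s r : ℝ) : ℝ := (R + r) * Real.cos (s / R)

/-- `y(s,r) = (R+r)sin(s/R)`. -/
noncomputable def yC (R s r : ℝ) : ℝ := (R + r) * Real.sin (s / R)

/-- `t(s,r) = h̃₀(s)`. -/
noncomputable def tC (h₀ : ℝ → ℝ) (s r : ℝ) : ℝ := h₀ s

/-- `ω̃ = x_s y_r − x_r y_s`. -/
noncomputable def omC (R s r : ℝ) : ℝ :=
  deriv (fun s' => xC R s' r) s * deriv (fun r' => yC R s r') r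
    - deriv (fun r' => xC R s r') r * deriv (fun s' => yC R s' r) s

/-- `p̃ = y_s t_r − y_r t_s − (y/2)(x_s y_r − x_r y_s)`. -/
noncomputable def pC (R : ℝ) (h₀ : ℝ → ℝ) (s r : ℝ) : ℝ :=
  deriv (fun s' => yC R s' r) s * deriv (fun r' => tC h₀ s r') r
    - deriv (fun r' => yC R s r') r * deriv (fun s' => tC h₀ s' r) s
    - yC R s r / 2 * omC R s r

/-- `q̃ = x_r t_s − x_s t_r + (x/2)(x_s y_r − x_r y_s)`. -/
noncomputable def qC (R : ℝ) (h₀ : ℝ → ℝ) (s r : ℝ) : ℝ :=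
  deriv (fun r' => xC R s r') r * deriv (fun s' => tC h₀ s' r) s
    - deriv (fun s' => xC R s' r) s * deriv (fun r' => tC h₀ s r') r
    + xC R s r / 2 * omC R s r

/-! The vector `(p̃, q̃)` is `(h̃₀'(s) − (R+r)²/(2R)) · (−sin(s/R), cos(s/R))`, so the angle function
vanishes exactly where `h̃₀'(s) = (R+r)²/(2R)`. As `r` varies this right-hand side takes every
nonnegative value, so a surface without characteristic points must have `h̃₀' < 0`. -/

lemma deriv_xC_s (R s r : ℝ) :
    deriv (fun s' => xC R s' r) s = (R + r) * (-Real.sin (s / R) * (1 / R)) :=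
  ((((hasDerivAt_id s).div_const R).cos).const_mul (R + r)).deriv

lemma deriv_yC_s (R s r : ℝ) :
    deriv (fun s' => yC R s' r) s = (R + r) * (Real.cos (s / R) * (1 / R)) :=
  ((((hasDerivAt_id s).div_const R).sin).const_mul (R + r)).deriv

lemma deriv_xC_r (R s r : ℝ) : deriv (fun r' => xC R s r') r = Real.cos (s / R) := by
  simp [xC]

lemma deriv_yC_r (R s r : ℝ) : deriv (fun r' => yC R s r') r = Real.sin (s / R) := by
  simp [yC]

lemma deriv_tC_r (h₀ : ℝ → ℝ) (s r : ℝ) : deriv (fun r' => tC h₀ s r') r = 0 := by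
  simp [tC]

lemma deriv_tC_s (h₀ : ℝ → ℝ) (s r : ℝ) : deriv (fun s' => tC h₀ s' r) s = deriv h₀ s := rfl

lemma omC_eq (R s r : ℝ) : omC R s r = -((R + r) / R) := by
  rw [omC, deriv_xC_s, deriv_yC_s, deriv_xC_r, deriv_yC_r]
  linear_combination (-(R + r) / R) * Real.sin_sq_add_cos_sq (s / R)

lemma pC_eq (R : ℝ) (h₀ : ℝ → ℝ) (s r : ℝ) :
    pC R h₀ s r = -Real.sin (s / R) * (deriv h₀ s - (R + r) ^ 2 / (2 * R)) := by
  rw [pC, deriv_yC_s, deriv_yC_r, deriv_tC_r, deriv_tC_s, omC_eq, yC]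
  ring

lemma qC_eq (R : ℝ) (h₀ : ℝ → ℝ) (s r : ℝ) :
    qC R h₀ s r = Real.cos (s / R) * (deriv h₀ s - (R + r) ^ 2 / (2 * R)) := by
  rw [qC, deriv_xC_s, deriv_xC_r, deriv_tC_r, deriv_tC_s, omC_eq, xC]
  ring

lemma pC_sq_add_qC_sq (R : ℝ) (h₀ : ℝ → ℝ) (s r : ℝ) :
    pC R h₀ s r ^ 2 + qC R h₀ s r ^ 2 = (deriv h₀ s - (R + r) ^ 2 / (2 * R)) ^ 2 := by
  rw [pC_eq, qC_eq]
  linear_combination (deriv h₀ s - (R + r) ^ 2 / (2 * R)) ^ 2 * Real.sin_sq_add_cos_sq (s / R)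

lemma exists_add_sq_div_eq {R : ℝ} (hR : 0 < R) {a : ℝ} (ha : 0 ≤ a) :
    ∃ r : ℝ, (R + r) ^ 2 / (2 * R) = a := by
  refine ⟨√(2 * R * a) - R, ?_⟩
  rw [add_sub_cancel, Real.sq_sqrt (by positivity)]
  field_simp

theorem stmt17_general (R : ℝ) (hR : 0 < R) (J : Set ℝ)
    (h₀ : ℝ → ℝ) :
    (∀ s ∈ J, ∀ r : ℝ,
      omC R s r = -((R + r) / R) ∧
      pC R h₀ s r ^ 2 + qC R h₀ s r ^ 2 = (deriv h₀ s - (R + r) ^ 2 / (2 * R)) ^ 2 ∧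
      Real.sqrt (pC R h₀ s r ^ 2 + qC R h₀ s r ^ 2)
        = |deriv h₀ s - (R + r) ^ 2 / (2 * R)|) ∧
    ((∀ s ∈ J, ∀ r : ℝ, pC R h₀ s r ^ 2 + qC R h₀ s r ^ 2 ≠ 0) →
      ∀ s ∈ J, deriv h₀ s < 0) := by
  refine ⟨fun s _ r => ⟨omC_eq R s r, pC_sq_add_qC_sq R h₀ s r, ?_⟩, fun hnc s hs => ?_⟩
  · rw [pC_sq_add_qC_sq, Real.sqrt_sq_eq_abs]
  · by_contra! hnonneg
    obtain ⟨r, hr⟩ := exists_add_sq_div_eq hR hnonneg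
    exact hnc s hs r (by rw [pC_sq_add_qC_sq, hr, sub_self, sq, mul_zero])

/-- for the parameterization `F̃(s,r) = ((R+r)cos(s/R), (R+r)sin(s/R), h̃₀(s))`
one has `ω̃ = −(R+r)/R`, `p̃² + q̃² = (h̃₀'(s) − (R+r)²/(2R))²`, hence the angle function is
`|h̃₀'(s) − (R+r)²/(2R)|`; and if the surface has no characteristic points on `J×ℝ`, then
`h̃₀' < 0` on `J`. -/
theorem stmt17 (R : ℝ) (hR : 0 < R) (J : Set ℝ) (hJ : J.OrdConnected)
    (h₀ : ℝ → ℝ) (hh₀ : ContDiffOn ℝ 1 h₀ J) :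
    (∀ s ∈ J, ∀ r : ℝ,
      omC R s r = -((R + r) / R) ∧
      pC R h₀ s r ^ 2 + qC R h₀ s r ^ 2 = (deriv h₀ s - (R + r) ^ 2 / (2 * R)) ^ 2 ∧
      Real.sqrt (pC R h₀ s r ^ 2 + qC R h₀ s r ^ 2)
        = |deriv h₀ s - (R + r) ^ 2 / (2 * R)|) ∧
    ((∀ s ∈ J, ∀ r : ℝ, pC R h₀ s r ^ 2 + qC R h₀ s r ^ 2 ≠ 0) →
      ∀ s ∈ J, deriv h₀ s < 0) :=
  stmt17_general R hR J h₀
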